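/- arXiv:2111.02876 — 2 statements merged into one kernel-verified Lean document; each statement's English description precedes it below -/
import Mathlib

section
/- Let ρ_T : H → B ⊗ H be a linear map such that for all characters χ of H and all admissible parameters v, the functional T_v(χ) defined by ⟨T_v(χ), x⟩ = ⟨e^v ⊗ χ, ρ_T(x)⟩ is again a character, T_v is an algebra morphism for the convolution product, and T_v(1-counit) behaves unitally. Then ρ_T satisfies the cointeraction axioms: ρ_T(1) = 1 ⊗ 1, ρ_T(x ⊙ y) = ρ_T(x)(⊙_B ⊗ ⊙_H)ρ_T(y), (Id ⊗ ε)ρ_T = 1_B ε, and (Id ⊗ Δ)ρ_T = m_B^{1,3}(ρ_T ⊗ ρ_T)Δ. -/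
open TensorProduct

noncomputable section

/-- Pairing of two linear functionals against a tensor product: `⟨f ⊗ g, m ⊗ n⟩`. -/
def pr {K : Type*} [CommSemiring K] {M N : Type*}
    [AddCommMonoid M] [Module K M] [AddCommMonoid N] [Module K N]
    (f : M →ₗ[K] K) (g : N →ₗ[K] K) : M ⊗[K] N →ₗ[K] K :=
  (TensorProduct.lid K K).toLinearMap ∘ₗ TensorProduct.map f g

/-- Convolution product of two linear functionals with respect to a coproduct `Δ`. -/
def conv {K : Type*} [CommSemiring K] {M : Type*} [AddCommMonoid M] [Module K M]
    (Δ : M →ₗ[K] M ⊗[K] M) (f g : M →ₗ[K] K) : M →ₗ[K] K :=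
  pr f g ∘ₗ Δ

/-- The translation operator dual to a coaction `ρ : H → B ⊗ H`, for a functional
`f` on `B` (playing the role of `e^v`): `⟨T_f(y), x⟩ = ⟨f ⊗ y, ρ(x)⟩`. -/
def Tmap {K : Type*} [CommSemiring K] {H B : Type*}
    [AddCommMonoid H] [Module K H] [AddCommMonoid B] [Module K B]
    (ρ : H →ₗ[K] B ⊗[K] H) (f : B →ₗ[K] K) (y : H →ₗ[K] K) : H →ₗ[K] K :=
  pr f y ∘ₗ ρ

/-- The map `m^{1,3}(a ⊗ b ⊗ c ⊗ d) = (a ⊙_B c) ⊗ b ⊗ d`. -/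
def m13 (K : Type*) [CommSemiring K] (B H : Type*)
    [CommRing B] [Algebra K B] [AddCommMonoid H] [Module K H] :
    (B ⊗[K] H) ⊗[K] (B ⊗[K] H) →ₗ[K] B ⊗[K] (H ⊗[K] H) :=
  TensorProduct.map (LinearMap.mul' K B) LinearMap.id ∘ₗ
    (TensorProduct.tensorTensorTensorComm K B H B H).toLinearMap

lemma pr_tmul {K : Type*} [CommSemiring K] {M N : Type*}
    [AddCommMonoid M] [Module K M] [AddCommMonoid N] [Module K N]
    (f : M →ₗ[K] K) (g : N →ₗ[K] K) (m : M) (n : N) :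
    pr f g (m ⊗ₜ[K] n) = f m * g n := by
  simp [pr, smul_eq_mul]

lemma pr_comp_map {K : Type*} [CommSemiring K] {M N M' N' : Type*}
    [AddCommMonoid M] [Module K M] [AddCommMonoid N] [Module K N]
    [AddCommMonoid M'] [Module K M'] [AddCommMonoid N'] [Module K N']
    (f : M' →ₗ[K] K) (g : N' →ₗ[K] K) (p : M →ₗ[K] M') (q : N →ₗ[K] N') :
    pr f g ∘ₗ TensorProduct.map p q = pr (f ∘ₗ p) (g ∘ₗ q) := by
  apply TensorProduct.ext'
  intro m n
  simp [pr_tmul]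

lemma pr_eq_productMap {K B H : Type*} [CommSemiring K] [CommSemiring B] [Algebra K B]
    [CommSemiring H] [Algebra K H] (φ : B →ₐ[K] K) (χ : H →ₐ[K] K) :
    pr φ.toLinearMap χ.toLinearMap = (Algebra.TensorProduct.productMap φ χ).toLinearMap := by
  apply TensorProduct.ext'
  intro m n
  simp [pr_tmul]

lemma pr_comp_m13 {K B H : Type*} [CommSemiring K] [CommRing B] [Algebra K B]
    [AddCommMonoid H] [Module K H]
    (φ : B →ₐ[K] K) (χ ψ : H →ₗ[K] K) :
    pr φ.toLinearMap (pr χ ψ) ∘ₗ m13 K B H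
      = pr (pr φ.toLinearMap χ) (pr φ.toLinearMap ψ) := by
  apply TensorProduct.ext_fourfold'
  intro a b c d
  simp only [LinearMap.comp_apply, m13, LinearEquiv.coe_coe,
    TensorProduct.tensorTensorTensorComm_tmul, TensorProduct.map_tmul,
    LinearMap.mul'_apply, LinearMap.id_coe, id_eq, pr_tmul, AlgHom.toLinearMap_apply, map_mul]
  ring

/-- if for every character `φ = e^v` of `B` and every character `χ` of `H`
the functional `T_v(χ) = (φ ⊗ χ) ∘ ρ_T` is again a character, `T_v` is a morphism for the
convolution product, and `T_v` is unital (`T_v(ε) = ε`), then `ρ_T` satisfies the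
cointeraction axioms: `ρ_T(1) = 1 ⊗ 1`, `ρ_T(x ⊙ y) = ρ_T(x) ρ_T(y)`,
`(Id ⊗ ε)ρ_T = 1_B ε` and `(Id ⊗ Δ)ρ_T = m^{1,3}(ρ_T ⊗ ρ_T)Δ`. -/
theorem translation_gives_cointeraction
    {K H B : Type*} [Field K] [CommRing H] [Algebra K H] [CommRing B] [Algebra K B]
    (ε : H →ₗ[K] K) (Δ : H →ₗ[K] H ⊗[K] H) (ρ : H →ₗ[K] B ⊗[K] H)
    -- `T_v(χ)` is a character of `H` for every character `φ = e^v` of `B` and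
    -- character `χ` of `H`:
    (hchar : ∀ (φ : B →ₐ[K] K) (χ : H →ₐ[K] K),
      Tmap ρ φ.toLinearMap χ.toLinearMap 1 = 1 ∧
      ∀ x y : H, Tmap ρ φ.toLinearMap χ.toLinearMap (x * y)
        = Tmap ρ φ.toLinearMap χ.toLinearMap x * Tmap ρ φ.toLinearMap χ.toLinearMap y)
    -- `T_v` is a morphism for the convolution product:
    (hconv : ∀ (φ : B →ₐ[K] K) (a b : H →ₗ[K] K),
      Tmap ρ φ.toLinearMap (conv Δ a b)
        = conv Δ (Tmap ρ φ.toLinearMap a) (Tmap ρ φ.toLinearMap b))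
    -- `T_v` behaves unitally on the convolution unit `ε`:
    (hunit : ∀ φ : B →ₐ[K] K, Tmap ρ φ.toLinearMap ε = ε)
    -- characters separate points:
    (hsepB : ∀ b b' : B, (∀ φ : B →ₐ[K] K, φ b = φ b') → b = b')
    (hsepBH : ∀ z w : B ⊗[K] H,
      (∀ (φ : B →ₐ[K] K) (χ : H →ₐ[K] K),
        pr φ.toLinearMap χ.toLinearMap z = pr φ.toLinearMap χ.toLinearMap w) → z = w)
    (hsepBHH : ∀ z w : B ⊗[K] (H ⊗[K] H),
      (∀ (φ : B →ₐ[K] K) (χ ψ : H →ₐ[K] K),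
        pr φ.toLinearMap (pr χ.toLinearMap ψ.toLinearMap) z
          = pr φ.toLinearMap (pr χ.toLinearMap ψ.toLinearMap) w) → z = w) :
    ρ 1 = 1 ⊗ₜ[K] 1 ∧
    (∀ x y : H, ρ (x * y) = ρ x * ρ y) ∧
    (∀ x : H, (TensorProduct.rid K B) ((LinearMap.lTensor B ε) (ρ x)) = ε x • (1 : B)) ∧
    LinearMap.lTensor B Δ ∘ₗ ρ = m13 K B H ∘ₗ TensorProduct.map ρ ρ ∘ₗ Δ := by
  refine ⟨?_, ?_, ?_, ?_⟩
  · apply hsepBH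
    intro φ χ
    have h1 := (hchar φ χ).1
    simp only [Tmap, LinearMap.comp_apply] at h1
    rw [h1, pr_tmul]
    simp
  · intro x y
    apply hsepBH
    intro φ χ
    have h2 := (hchar φ χ).2 x y
    simp only [Tmap, LinearMap.comp_apply] at h2
    rw [h2, pr_eq_productMap]
    simp [map_mul]
  · intro x
    apply hsepB
    intro φ
    have key : φ.toLinearMap ∘ₗ (TensorProduct.rid K B).toLinearMap
        ∘ₗ LinearMap.lTensor B ε = pr φ.toLinearMap ε := by
      apply TensorProduct.ext'
      intro b h
      simp [pr_tmul, LinearMap.lTensor_tmul, mul_comm]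
    have := LinearMap.congr_fun (hunit φ) x
    simp only [Tmap, LinearMap.comp_apply] at this
    calc φ ((TensorProduct.rid K B) ((LinearMap.lTensor B ε) (ρ x)))
        = (φ.toLinearMap ∘ₗ (TensorProduct.rid K B).toLinearMap
            ∘ₗ LinearMap.lTensor B ε) (ρ x) := rfl
      _ = pr φ.toLinearMap ε (ρ x) := by rw [key]
      _ = ε x := this
      _ = φ (ε x • (1 : B)) := by simp [Algebra.smul_def]
  · apply LinearMap.ext
    intro x
    apply hsepBHH
    intro φ χ ψ
    have lhs1 : pr φ.toLinearMap (pr χ.toLinearMap ψ.toLinearMap)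
        ∘ₗ LinearMap.lTensor B Δ
        = pr φ.toLinearMap (pr χ.toLinearMap ψ.toLinearMap ∘ₗ Δ) := by
      have := pr_comp_map (K := K) φ.toLinearMap (pr χ.toLinearMap ψ.toLinearMap)
        (LinearMap.id (M := B)) Δ
      simpa [LinearMap.lTensor, LinearMap.comp_id] using this
    have hc := hconv φ χ.toLinearMap ψ.toLinearMap
    have hcx := LinearMap.congr_fun hc x
    simp only [Tmap, conv, LinearMap.comp_apply] at hcx
    have lcalc : pr φ.toLinearMap (pr χ.toLinearMap ψ.toLinearMap)
        ((LinearMap.lTensor B Δ ∘ₗ ρ) x)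
        = pr (pr φ.toLinearMap χ.toLinearMap ∘ₗ ρ) (pr φ.toLinearMap ψ.toLinearMap ∘ₗ ρ)
          (Δ x) := by
      have : pr φ.toLinearMap (pr χ.toLinearMap ψ.toLinearMap)
          ((LinearMap.lTensor B Δ) (ρ x))
          = pr φ.toLinearMap (pr χ.toLinearMap ψ.toLinearMap ∘ₗ Δ) (ρ x) := by
        rw [← lhs1]; rfl
      simp only [LinearMap.comp_apply]
      rw [this, hcx]
    have rcalc : pr φ.toLinearMap (pr χ.toLinearMap ψ.toLinearMap)
        ((m13 K B H ∘ₗ TensorProduct.map ρ ρ ∘ₗ Δ) x)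
        = pr (pr φ.toLinearMap χ.toLinearMap ∘ₗ ρ) (pr φ.toLinearMap ψ.toLinearMap ∘ₗ ρ)
          (Δ x) := by
      simp only [LinearMap.comp_apply]
      rw [show pr φ.toLinearMap (pr χ.toLinearMap ψ.toLinearMap)
          ((m13 K B H) ((TensorProduct.map ρ ρ) (Δ x)))
          = (pr φ.toLinearMap (pr χ.toLinearMap ψ.toLinearMap) ∘ₗ m13 K B H
              ∘ₗ TensorProduct.map ρ ρ) (Δ x) from rfl]
      rw [← LinearMap.comp_assoc, pr_comp_m13, pr_comp_map]
    rw [lcalc, rcalc]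

end
end

section
/- If a non-degenerate combinatorial Hopf algebra (H,⊙,Δ) is in cointeraction with (S(H_in × B₁), ·, Δ_·) via a coaction ρ_T : H → S(H_in × B₁) ⊗ H, then the dual map T_v defined by ⟨T_v(y), x⟩ = ⟨e^v ⊗ y, ρ_T(x)⟩ is an algebra morphism for the convolution product on the dual of H, i.e., T_v(a ∗ b) = T_v(a) ∗ T_v(b). -/
open TensorProduct

noncomputable section

/-- If a combinatorial Hopf algebra `H` is in cointeraction with `B`
via `ρ_T` (in particular `(Id ⊗ Δ)ρ_T = m^{1,3}(ρ_T ⊗ ρ_T)Δ`), then the dual map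
`T_v` defined by `⟨T_v(y), x⟩ = ⟨e^v ⊗ y, ρ_T(x)⟩` is an algebra morphism for the
convolution product: `T_v(a ∗ b) = T_v(a) ∗ T_v(b)`. -/
theorem cointeraction_gives_convolution_morphism
    {K H B : Type*} [Field K] [CommRing H] [Algebra K H] [CommRing B] [Algebra K B]
    (Δ : H →ₗ[K] H ⊗[K] H) (ρ : H →ₗ[K] B ⊗[K] H)
    (hco : LinearMap.lTensor B Δ ∘ₗ ρ = m13 K B H ∘ₗ TensorProduct.map ρ ρ ∘ₗ Δ)
    (φ : B →ₐ[K] K) (a b : H →ₗ[K] K) :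
    Tmap ρ φ.toLinearMap (conv Δ a b)
      = conv Δ (Tmap ρ φ.toLinearMap a) (Tmap ρ φ.toLinearMap b) := by
  have key : pr φ.toLinearMap (pr a b) ∘ₗ m13 K B H
      = pr (pr φ.toLinearMap a) (pr φ.toLinearMap b) := by
    apply TensorProduct.ext
    apply TensorProduct.ext'
    intro b1 h1
    apply TensorProduct.ext'
    intro b2 h2
    simp [pr, m13, LinearMap.mul'_apply, map_mul]
    ring
  have lemA : pr φ.toLinearMap (pr a b ∘ₗ Δ)
      = pr φ.toLinearMap (pr a b) ∘ₗ LinearMap.lTensor B Δ := by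
    apply TensorProduct.ext'
    intro x y
    simp [pr]
  have lemB : pr (pr φ.toLinearMap a ∘ₗ ρ) (pr φ.toLinearMap b ∘ₗ ρ)
      = pr (pr φ.toLinearMap a) (pr φ.toLinearMap b) ∘ₗ TensorProduct.map ρ ρ := by
    apply TensorProduct.ext'
    intro x y
    simp [pr]
  calc Tmap ρ φ.toLinearMap (conv Δ a b)
      = pr φ.toLinearMap (pr a b ∘ₗ Δ) ∘ₗ ρ := rfl
    _ = pr φ.toLinearMap (pr a b) ∘ₗ (LinearMap.lTensor B Δ ∘ₗ ρ) := by
        rw [lemA, LinearMap.comp_assoc]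
    _ = pr φ.toLinearMap (pr a b) ∘ₗ (m13 K B H ∘ₗ TensorProduct.map ρ ρ ∘ₗ Δ) := by
        rw [hco]
    _ = (pr φ.toLinearMap (pr a b) ∘ₗ m13 K B H) ∘ₗ TensorProduct.map ρ ρ ∘ₗ Δ := by
        rw [LinearMap.comp_assoc]
    _ = (pr (pr φ.toLinearMap a) (pr φ.toLinearMap b) ∘ₗ TensorProduct.map ρ ρ) ∘ₗ Δ := by
        rw [key, LinearMap.comp_assoc]
    _ = conv Δ (Tmap ρ φ.toLinearMap a) (Tmap ρ φ.toLinearMap b) := by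
        rw [← lemB]; rfl

end
end
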